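/- Let V be a ℚ-vector space with symmetric bilinear form of signature (1,n), FPℚ the rational points of a forward cone component, F a subset of V, and FPℚ_F = {e ∈ FPℚ : e·f > 0 for all f ∈ F}. Then closure(FP)ℚ + Σ_{f∈F} ℚ⁺f ⊆ (FPℚ_F)^, where ℚ⁺ denotes positive rationals and the sum means the set of finite sums of elements from the summand cones. -/

import Mathlib

/-- The rational Minkowski form of signature (1,n). -/
def qform (n : ℕ) (x y : Fin (n+1) → ℚ) : ℚ :=
  x 0 * y 0 - ∑ i : Fin n, x i.succ * y i.succ

/-- The rational points of the forward component of the positive cone. -/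
def FPQ (n : ℕ) : Set (Fin (n+1) → ℚ) := {x | 0 < qform n x x ∧ 0 < x 0}

lemma qform_add_left (n : ℕ) (x y z : Fin (n+1) → ℚ) :
    qform n (x + y) z = qform n x z + qform n y z := by
  simp [qform, add_mul, Finset.sum_add_distrib]
  ring

lemma qform_smul_left (n : ℕ) (a : ℚ) (x y : Fin (n+1) → ℚ) :
    qform n (a • x) y = a * qform n x y := by
  simp only [qform, Pi.smul_apply, smul_eq_mul, Finset.mul_sum, mul_sub, mul_assoc]

lemma qform_sum_left (n : ℕ) (s : Finset (Fin (n+1) → ℚ)) (g : (Fin (n+1) → ℚ) → (Fin (n+1) → ℚ))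
    (y : Fin (n+1) → ℚ) :
    qform n (∑ f ∈ s, g f) y = ∑ f ∈ s, qform n (g f) y := by
  classical
  induction s using Finset.induction with
  | empty => simp [qform]
  | insert a t h ih =>
    rw [Finset.sum_insert h, Finset.sum_insert h, qform_add_left, ih]

lemma qform_comm (n : ℕ) (x y : Fin (n+1) → ℚ) :
    qform n x y = qform n y x := by
  simp [qform, mul_comm]

/-- Lorentzian Cauchy–Schwarz: a nonzero causal future vector pairs positively
with a timelike future vector. -/
lemma qform_pos_of_causal (n : ℕ) (c e : Fin (n+1) → ℚ)
    (hcc : 0 ≤ qform n c c) (hc0 : 0 ≤ c 0) (hcne : c ≠ 0)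
    (hee : 0 < qform n e e) (he0 : 0 < e 0) : 0 < qform n c e := by
  set A : ℚ := ∑ i : Fin n, c i.succ * c i.succ with hA
  set B : ℚ := ∑ i : Fin n, e i.succ * e i.succ with hB
  set S : ℚ := ∑ i : Fin n, c i.succ * e i.succ with hS
  have hAnn : 0 ≤ A := Finset.sum_nonneg fun i _ => mul_self_nonneg _
  have hAle : A ≤ c 0 * c 0 := by
    have := hcc; simp only [qform] at this; linarith
  have hBlt : B < e 0 * e 0 := by
    have := hee; simp only [qform] at this; linarith
  have hCS : S ^ 2 ≤ A * B := by
    have := Finset.sum_mul_sq_le_sq_mul_sq Finset.univ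
      (fun i : Fin n => c i.succ) (fun i : Fin n => e i.succ)
    simpa [hA, hB, hS, sq] using this
  have hc0pos : 0 < c 0 := by
    rcases lt_or_eq_of_le hc0 with h | h
    · exact h
    · -- c 0 = 0, so A ≤ 0 hence A = 0, hence c = 0, contradiction
      exfalso
      have hA0 : A = 0 := le_antisymm (by nlinarith) hAnn
      apply hcne
      funext i
      refine Fin.cases ?_ ?_ i
      · exact h.symm
      · intro j
        have : ∀ i ∈ Finset.univ, c (Fin.succ i) * c (Fin.succ i) = 0 :=
          (Finset.sum_eq_zero_iff_of_nonneg fun i _ => mul_self_nonneg _).mp hA0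
        have := this j (Finset.mem_univ j)
        exact mul_self_eq_zero.mp this
  rcases eq_or_lt_of_le hAnn with hA0 | hApos
  · have hS0 : S = 0 := by nlinarith [sq_nonneg S]
    simp only [qform, ← hS, hS0]
    have : 0 < c 0 * e 0 := mul_pos hc0pos he0
    linarith
  · have h1 : S ^ 2 < (c 0 * e 0) ^ 2 := by nlinarith
    have h2 : S < c 0 * e 0 := by
      have hpos : (0:ℚ) ≤ c 0 * e 0 := by positivity
      exact lt_of_pow_lt_pow_left₀ 2 hpos h1
    simp only [qform, ← hS]
    linarith

/-- One inclusion of Lemma 6.2: closure(FP)ℚ + Σ_{f ∈ F} ℚ⁺·f is contained in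
the dual of FPℚ_F = {e ∈ FPℚ | e·f > 0 ∀ f ∈ F}. -/
theorem stmt13 (n : ℕ) (F : Set (Fin (n+1) → ℚ))
    (c : Fin (n+1) → ℚ) (hc : (0 ≤ qform n c c ∧ 0 ≤ c 0) ∧ c ≠ 0)
    (s : Finset (Fin (n+1) → ℚ)) (hs : (s : Set (Fin (n+1) → ℚ)) ⊆ F)
    (q : (Fin (n+1) → ℚ) → ℚ) (hq : ∀ f ∈ s, 0 < q f) :
    ∀ e ∈ {e ∈ FPQ n | ∀ f ∈ F, 0 < qform n e f},
      0 < qform n (c + ∑ f ∈ s, q f • f) e := by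
  rintro e ⟨⟨hee, he0⟩, heF⟩
  rw [qform_add_left, qform_sum_left]
  have h1 : 0 < qform n c e :=
    qform_pos_of_causal n c e hc.1.1 hc.1.2 hc.2 hee he0
  have h2 : 0 ≤ ∑ f ∈ s, qform n (q f • f) e := by
    apply Finset.sum_nonneg
    intro f hf
    rw [qform_smul_left]
    have := heF f (hs hf)
    have hqf := hq f hf
    rw [qform_comm] at this
    positivity
  linarith
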